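/- arXiv:1611.07223 — 2 statements merged into one kernel-verified Lean document; each statement's English description precedes it below -/
import Mathlib

section
/- Let M be a separable metric space, Φ : [0,∞) × M → M a semiflow, and μ a Φ-invariant Borel probability measure on M. Let H = supp(μ) and assume H is invariant in the sense that Φ(t,·)(H) ⊆ H for every t ≥ 0. Then H equals the closure of the set of its recurrent points: supp(μ) = closure of {x ∈ supp(μ) : x ∈ ω(x)}; in particular, the recurrent points of Φ lying in supp(μ) are dense in supp(μ). -/
open MeasureTheory Topology Filter Set

/-- The ω-limit set of a point `x` under the semiflow `Φ`. -/
def omegaLimitSet {M : Type*} [TopologicalSpace M] (Φ : ℝ → M → M) (x : M) : Set M :=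
  {y | ∀ U ∈ nhds y, ∀ k : ℕ, ∃ s : ℝ, (k : ℝ) ≤ s ∧ Φ s x ∈ U}

/-!
Proof idea: the time-one map `Φ 1` preserves the finite measure `μ`, so by Poincaré recurrence
almost every point returns to each of its neighbourhoods at infinitely many integer times, and
hence lies in its own ω-limit set. In a second countable space the support is conull, so the
recurrent points of the support form a conull set; a conull set is dense in the support.
-/

theorem iterate_one_eq_of_semiflow {M : Type*} (Φ : ℝ → M → M) (hid : ∀ x, Φ 0 x = x)
    (hsemi : ∀ t s : ℝ, 0 ≤ t → 0 ≤ s → ∀ x, Φ t (Φ s x) = Φ (t + s) x) (n : ℕ) :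
    (Φ 1)^[n] = Φ n := by
  induction n with
  | zero => rw [Nat.cast_zero]; exact funext fun x => (hid x).symm
  | succ n ih =>
    funext x
    rw [Function.iterate_succ_apply', ih, hsemi 1 n zero_le_one n.cast_nonneg, add_comm]
    push_cast
    rfl

theorem mem_omegaLimitSet_of_frequently {M : Type*} [TopologicalSpace M] {Φ : ℝ → M → M}
    {x y : M} (h : ∀ U ∈ 𝓝 y, ∃ᶠ n : ℕ in atTop, Φ n x ∈ U) : y ∈ omegaLimitSet Φ x := by
  intro U hU k
  obtain ⟨n, hkn, hn⟩ := frequently_atTop.mp (h U hU) k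
  exact ⟨n, by exact_mod_cast hkn, hn⟩

theorem ae_mem_omegaLimitSet_self {M : Type*} [TopologicalSpace M] [SecondCountableTopology M]
    [MeasurableSpace M] [OpensMeasurableSpace M] (Φ : ℝ → M → M) (hid : ∀ x, Φ 0 x = x)
    (hsemi : ∀ t s : ℝ, 0 ≤ t → 0 ≤ s → ∀ x, Φ t (Φ s x) = Φ (t + s) x)
    (μ : Measure M) [IsFiniteMeasure μ] (hmp : MeasurePreserving (Φ 1) μ μ) :
    ∀ᵐ x ∂μ, x ∈ omegaLimitSet Φ x := by
  filter_upwards [hmp.conservative.ae_frequently_mem_of_mem_nhds] with x hx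
  refine mem_omegaLimitSet_of_frequently fun U hU => ?_
  simpa only [iterate_one_eq_of_semiflow Φ hid hsemi] using hx U hU

theorem Measure.support_subset_closure_of_ae_mem {X : Type*} [TopologicalSpace X]
    [MeasurableSpace X] {μ : Measure X} {R : Set X} (h : ∀ᵐ x ∂μ, x ∈ R) :
    μ.support ⊆ closure R :=
  Measure.support_subset_of_isClosed isClosed_closure (mem_of_superset h subset_closure)

theorem support_eq_closure_recurrent_points_general
    {M : Type*} [MetricSpace M] [TopologicalSpace.SeparableSpace M]
    [MeasurableSpace M] [BorelSpace M]
    (Φ : ℝ → M → M)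
    (hmeas : ∀ t : ℝ, 0 ≤ t → Measurable (Φ t))
    (hid : ∀ x : M, Φ 0 x = x)
    (hsemi : ∀ t s : ℝ, 0 ≤ t → 0 ≤ s → ∀ x : M, Φ t (Φ s x) = Φ (t + s) x)
    (μ : Measure M) [IsProbabilityMeasure μ]
    (hinv : ∀ t : ℝ, 0 ≤ t → ∀ A : Set M, MeasurableSet A → μ (Φ t ⁻¹' A) = μ A) :
    {x : M | ∀ U ∈ nhds x, 0 < μ U} =
      closure {x : M | (∀ U ∈ nhds x, 0 < μ U) ∧ x ∈ omegaLimitSet Φ x} := by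
  have hmp : MeasurePreserving (Φ 1) μ μ :=
    ⟨hmeas 1 zero_le_one, Measure.ext fun A hA => by
      rw [Measure.map_apply (hmeas 1 zero_le_one) hA, hinv 1 zero_le_one A hA]⟩
  simp only [← Measure.mem_support_iff_forall, ofPred_mem_eq]
  refine subset_antisymm (Measure.support_subset_closure_of_ae_mem ?_)
    (closure_minimal (fun x hx => hx.1) Measure.isClosed_support)
  filter_upwards [Measure.support_mem_ae, ae_mem_omegaLimitSet_self Φ hid hsemi μ hmp]
    with x hx_supp hx_rec
  exact ⟨hx_supp, hx_rec⟩

/-- If `μ` is a `Φ`-invariant Borel probability measure on a separable metric space whose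
support `H = supp μ` is invariant (`Φ t '' H ⊆ H` for all `t ≥ 0`), then `H` coincides
with the closure of its recurrent points: every point of the support is a limit of
recurrent points of the restricted semiflow. -/
theorem support_eq_closure_recurrent_points
    {M : Type*} [MetricSpace M] [TopologicalSpace.SeparableSpace M]
    [MeasurableSpace M] [BorelSpace M]
    (Φ : ℝ → M → M)
    (hcont_t : ∀ x : M, ContinuousOn (fun t : ℝ => Φ t x) (Set.Ici 0))
    (hmeas : ∀ t : ℝ, 0 ≤ t → Measurable (Φ t))
    (hid : ∀ x : M, Φ 0 x = x)
    (hsemi : ∀ t s : ℝ, 0 ≤ t → 0 ≤ s → ∀ x : M, Φ t (Φ s x) = Φ (t + s) x)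
    (μ : Measure M) [IsProbabilityMeasure μ]
    (hinv : ∀ t : ℝ, 0 ≤ t → ∀ A : Set M, MeasurableSet A → μ (Φ t ⁻¹' A) = μ A)
    (hHinv : ∀ t : ℝ, 0 ≤ t →
      Φ t '' {x : M | ∀ U ∈ nhds x, 0 < μ U} ⊆ {x : M | ∀ U ∈ nhds x, 0 < μ U}) :
    {x : M | ∀ U ∈ nhds x, 0 < μ U} =
      closure {x : M | (∀ U ∈ nhds x, 0 < μ U) ∧ x ∈ omegaLimitSet Φ x} :=
  support_eq_closure_recurrent_points_general Φ hmeas hid hsemi μ hinv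
end

section
/- For the Bernoulli-lemniscate system, the zero set of the gradient of the Lyapunov function W(x,y) = V(I(x,y)) is exactly the lemniscate of Bernoulli together with the two foci equilibria: ∇W(x,y) = (0,0) if and only if (x,y) lies on the curve L = {(x,y) ∈ ℝ² : (x²+y²)² = 4(x²−y²)} or (x,y) ∈ {(√2, 0), (−√2, 0)}. -/
/-!
Since `W = V ∘ I` and `V' = f` vanishes only at `0`, the gradient `∇W = f(I) • ∇I` vanishes
exactly where `I = 0` or `∇I = 0`. The second component of `∇I` is `4y(x² + y² + 2)`, so a
critical point of `I` has `y = 0` and then `4x(x² − 2) = 0`: it is the origin, which lies on the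
lemniscate, or one of the foci `(±√2, 0)`.
-/

/-- `I(x,y) = (x²+y²)² − 4(x²−y²)`. -/
noncomputable def lemI (x y : ℝ) : ℝ := (x ^ 2 + y ^ 2) ^ 2 - 4 * (x ^ 2 - y ^ 2)

/-- `V(s) = s²/(2(1+s²)^{3/4})`. -/
noncomputable def lemV (s : ℝ) : ℝ := s ^ 2 / (2 * (1 + s ^ 2) ^ ((3 : ℝ) / 4))

/-- The Lyapunov function `W = V ∘ I` on `ℝ²`. -/
noncomputable def lemW (p : EuclideanSpace ℝ (Fin 2)) : ℝ := lemV (lemI (p 0) (p 1))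

noncomputable def lemf (s : ℝ) : ℝ := s * (s ^ 2 + 4) / (4 * (1 + s ^ 2) ^ ((7 : ℝ) / 4))

noncomputable def lemGradI (p : EuclideanSpace ℝ (Fin 2)) : EuclideanSpace ℝ (Fin 2) :=
  !₂[4 * p 0 * (p 0 ^ 2 + p 1 ^ 2) - 8 * p 0, 4 * p 1 * (p 0 ^ 2 + p 1 ^ 2) + 8 * p 1]

theorem HasDerivAt.comp_hasGradientAt {F : Type*} [NormedAddCommGroup F] [InnerProductSpace ℝ F]
    [CompleteSpace F] {g : ℝ → ℝ} {g' : ℝ} {h : F → ℝ} {h' x : F}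
    (hg : HasDerivAt g g' (h x)) (hh : HasGradientAt h h' x) :
    HasGradientAt (g ∘ h) (g' • h') x := by
  rw [hasGradientAt_iff_hasFDerivAt] at hh ⊢
  simpa [map_smulₛₗ] using hg.comp_hasFDerivAt x hh

lemma hasDerivAt_lemV (s : ℝ) : HasDerivAt lemV (lemf s) s := by
  have ht : 0 < 1 + s ^ 2 := by positivity
  have hr := ((hasDerivAt_pow 2 s).const_add 1).rpow_const (p := 3 / 4) (Or.inl ht.ne')
  refine ((hasDerivAt_pow 2 s).div (hr.const_mul 2) (by positivity)).congr_deriv ?_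
  unfold lemf
  rw [Real.rpow_sub_one ht.ne', show (7 : ℝ) / 4 = 1 + 3 / 4 by norm_num,
    Real.rpow_add ht, Real.rpow_one]
  field_simp
  ring

lemma lemf_eq_zero_iff {s : ℝ} : lemf s = 0 ↔ s = 0 := by
  have h1 : s ^ 2 + 4 ≠ 0 := by positivity
  have h2 : 4 * (1 + s ^ 2) ^ ((7 : ℝ) / 4) ≠ 0 := by positivity
  simp [lemf, h1, h2]

lemma hasGradientAt_lemI (p : EuclideanSpace ℝ (Fin 2)) :
    HasGradientAt (fun q : EuclideanSpace ℝ (Fin 2) => lemI (q 0) (q 1)) (lemGradI p) p := by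
  rw [hasGradientAt_iff_hasFDerivAt]
  have hx := PiLp.hasFDerivAt_apply (𝕜 := ℝ) 2 p 0
  have hy := PiLp.hasFDerivAt_apply (𝕜 := ℝ) 2 p 1
  have hI := (((hx.pow 2).add (hy.pow 2)).pow 2).sub (((hx.pow 2).sub (hy.pow 2)).const_mul 4)
  refine hI.congr_fderiv (ContinuousLinearMap.ext fun w => ?_)
  simp only [lemGradI, InnerProductSpace.toDual_apply_apply, PiLp.inner_apply, Fin.sum_univ_two,
    sub_apply, add_apply, smul_apply, Pi.add_apply,
    PiLp.proj_apply, Matrix.cons_val_zero, Matrix.cons_val_one, Matrix.cons_val_fin_one,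
    RCLike.inner_apply, conj_trivial, smul_eq_mul, nsmul_eq_mul]
  ring

lemma hasGradientAt_lemW (p : EuclideanSpace ℝ (Fin 2)) :
    HasGradientAt lemW (lemf (lemI (p 0) (p 1)) • lemGradI p) p :=
  (hasDerivAt_lemV _).comp_hasGradientAt (hasGradientAt_lemI p)

lemma lemI_partials_eq_zero_iff (x y : ℝ) :
    4 * x * (x ^ 2 + y ^ 2) - 8 * x = 0 ∧ 4 * y * (x ^ 2 + y ^ 2) + 8 * y = 0 ↔
      (x = 0 ∨ x ^ 2 = 2) ∧ y = 0 := by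
  have hy : 4 * y * (x ^ 2 + y ^ 2) + 8 * y = 0 ↔ y = 0 := by
    rw [show 4 * y * (x ^ 2 + y ^ 2) + 8 * y = 4 * (x ^ 2 + y ^ 2 + 2) * y by ring, mul_eq_zero,
      or_iff_right (by positivity)]
  rw [hy]
  constructor
  · rintro ⟨hx, rfl⟩
    have : x * (x ^ 2 - 2) = 0 := by linear_combination hx / 4
    simpa [sub_eq_zero] using this
  · rintro ⟨rfl | hx, rfl⟩
    · simp
    · exact ⟨by linear_combination 4 * x * hx, rfl⟩

lemma lemGradI_eq_zero_iff (p : EuclideanSpace ℝ (Fin 2)) :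
    lemGradI p = 0 ↔ p = 0 ∨ p = !₂[√2, 0] ∨ p = !₂[-√2, 0] := by
  have hsqrt : p 0 ^ 2 = 2 ↔ p 0 = √2 ∨ p 0 = -√2 := by
    rw [← sq_eq_sq_iff_eq_or_eq_neg, Real.sq_sqrt zero_le_two]
  simp only [PiLp.ext_iff, Fin.forall_fin_two, lemGradI, PiLp.zero_apply,
    Matrix.cons_val_zero, Matrix.cons_val_one, Matrix.cons_val_fin_one]
  rw [lemI_partials_eq_zero_iff, hsqrt, or_and_right, or_and_right]

/-- The zero set of the gradient of `W = V ∘ I` is exactly the lemniscate of Bernoulli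
`{(x,y) : (x²+y²)² = 4(x²−y²)}` together with the two foci `(√2, 0)` and `(−√2, 0)`. -/
theorem lemniscate_gradient_zero_set (p : EuclideanSpace ℝ (Fin 2)) :
    gradient lemW p = 0 ↔
      ((p 0 ^ 2 + p 1 ^ 2) ^ 2 = 4 * (p 0 ^ 2 - p 1 ^ 2) ∨
        p = (WithLp.equiv 2 (Fin 2 → ℝ)).symm ![Real.sqrt 2, 0] ∨
        p = (WithLp.equiv 2 (Fin 2 → ℝ)).symm ![-Real.sqrt 2, 0]) := by
  rw [(hasGradientAt_lemW p).gradient, smul_eq_zero, lemf_eq_zero_iff, lemGradI_eq_zero_iff,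
    lemI, sub_eq_zero, or_left_comm]
  exact or_iff_right_of_imp fun h => Or.inl (by simp [h])
end
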